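/- Let [u,v] and [u*,v*] be nondegenerate closed intervals, and let C ⊆ [u,v] and C* ⊆ [u*,v*] be the images of the standard middle-thirds Cantor set under the increasing affine bijections [0,1] → [u,v] and [0,1] → [u*,v*] respectively. Let p₁ < p₂ be two points of C each of which is a left endpoint of a bounded connected component of [u,v] ∖ C, and let p₁* < p₂* be two points of C* each of which is a left endpoint of a bounded connected component of [u*,v*] ∖ C*. Then there exists an increasing homeomorphism f : [u,v] → [u*,v*] with f(C) = C*, f(p₁) = p₁*, and f(p₂) = p₂*. -/

import Mathlib

open Set Topology Filter

/-- The standard middle-thirds Cantor set: points of `[0,1]` admitting a ternary expansion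
using only the digits `0` and `2`. -/
def cantorC : Set ℝ :=
  {x | ∃ a : ℕ → ℕ, (∀ n, a n = 0 ∨ a n = 2) ∧ x = ∑' n, (a n : ℝ) / 3 ^ (n + 1)}

/-- The increasing affine bijection `[0,1] → [u,v]`. -/
def affineIcc (u v : ℝ) : ℝ → ℝ := fun t => u + (v - u) * t

/-- `p` is the left endpoint of a bounded connected component of `[u,v] ∖ C` (for a Cantor
set `C ⊆ [u,v]` containing `u` and `v`): `p ∈ C`, `p < v`, and `C` has a gap just to the
right of `p`. -/
def IsLeftEndpoint (C : Set ℝ) (v p : ℝ) : Prop :=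
  p ∈ C ∧ p < v ∧ ∃ ε > 0, Set.Ioo p (p + ε) ∩ C = ∅

/-! A piece of `K ⊆ ℝ` is an interval on which `K` is an affine copy of `K`, a gap one that meets
`K` only at its endpoints. The Cantor set is a piece, a gap and a piece, so every piece splits into
two pieces and a gap; hence two chains (pieces separated by gaps) can be refined to the same length,
and are then matched by a piecewise affine increasing homeomorphism. A left endpoint `q` of a gap
arises from `1/3` by finitely many applications of `x ↦ x/3` and `x ↦ (2+x)/3`, which shows that
`K ∩ [0, q]` is a chain, and so are `K ∩ [r, 1]` and `K ∩ [r, p]` for every left endpoint `p > q`,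
`r` being the right end of the gap at `q`. Matching these parts for `q₁ < q₂` with those for
`q₁' < q₂'` and gluing gives the homeomorphism of `[0, 1]`; affine conjugation handles general
intervals. -/

theorem cantorC_eq_cantorSet : cantorC = cantorSet := by
  rw [cantorSet_eq_zero_two_ofDigits]
  ext x
  simp only [cantorC, mem_ofPred_eq, Real.ofDigits, Real.ofDigitsTerm]
  constructor
  · rintro ⟨a, ha, rfl⟩
    have ha3 (n : ℕ) : a n < 3 := by rcases ha n with h | h <;> omega
    refine ⟨fun n => ⟨a n, ha3 n⟩, fun n => ?_,
      tsum_congr fun n => by simp [div_eq_mul_inv]⟩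
    rcases ha n with h | h <;> simp [Fin.ext_iff, h]
  · rintro ⟨d, hd, rfl⟩
    refine ⟨fun n => d n, fun n => ?_, tsum_congr fun n => by simp [div_eq_mul_inv]⟩
    show (d n : ℕ) = 0 ∨ (d n : ℕ) = 2
    have := hd n
    generalize d n = i at *
    fin_cases i <;> simp_all

lemma one_mem_cantorSet : (1 : ℝ) ∈ cantorSet :=
  cantorSet_eq_zero_two_ofDigits ▸
    ⟨fun _ => Fin.last 2, fun _ => by simp [Fin.ext_iff], Real.ofDigits_const_last_eq_one 2⟩

noncomputable def affineIccIso {u v : ℝ} (h : u < v) : ℝ ≃o ℝ :=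
  (OrderIso.mulLeft₀ (v - u) (sub_pos.2 h)).trans (OrderIso.addLeft u)

lemma coe_affineIccIso {u v : ℝ} (h : u < v) : ⇑(affineIccIso h) = affineIcc u v := rfl

@[simp] lemma affineIcc_zero (u v : ℝ) : affineIcc u v 0 = u := by simp [affineIcc]

@[simp] lemma affineIcc_one (u v : ℝ) : affineIcc u v 1 = v := by simp [affineIcc]

section Matching

variable {K : Set ℝ} {f g : ℝ → ℝ} {a b m a' b' m' : ℝ}

structure IsIccMatch (K : Set ℝ) (f : ℝ → ℝ) (a b a' b' : ℝ) : Prop where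
  continuous : Continuous f
  strictMono : StrictMono f
  map_left : f a = a'
  map_right : f b = b'
  image_inter_Icc : f '' (K ∩ Icc a b) = K ∩ Icc a' b'

def IccMatch (K : Set ℝ) (a b a' b' : ℝ) : Prop := ∃ f, IsIccMatch K f a b a' b'

lemma IsIccMatch.image_Icc (hf : IsIccMatch K f a b a' b') (hab : a ≤ b) :
    f '' Icc a b = Icc a' b' := by
  rw [← hf.map_left, ← hf.map_right]
  exact hf.continuous.continuousOn.image_Icc_of_monotoneOn hab (hf.strictMono.monotone.monotoneOn _)

lemma IsIccMatch.piecewise (hf : IsIccMatch K f a m a' m') (hg : IsIccMatch K g m b m' b')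
    (ham : a ≤ m) (hmb : m ≤ b) :
    IsIccMatch K (fun x => if x ≤ m then f x else g x) a b a' b' := by
  have hright (x : ℝ) (hx : m ≤ x) : (if x ≤ m then f x else g x) = g x := by
    rcases hx.eq_or_lt with rfl | hlt
    · simp [hf.map_right, hg.map_left]
    · simp [not_le.2 hlt]
  have ham' : a' ≤ m' :=
    (hf.map_left.symm.trans_le (hf.strictMono.monotone ham)).trans_eq hf.map_right
  have hmb' : m' ≤ b' :=
    (hg.map_left.symm.trans_le (hg.strictMono.monotone hmb)).trans_eq hg.map_right
  refine ⟨hf.continuous.if_le hg.continuous continuous_id continuous_const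
    fun x hx => by rw [hx, hf.map_right, hg.map_left], ?_, by simp [ham, hf.map_left],
    by rw [hright b hmb, hg.map_right], ?_⟩
  · exact StrictMonoOn.Iic_union_Ici
      ((hf.strictMono.strictMonoOn _).congr fun x hx => (if_pos hx).symm)
      ((hg.strictMono.strictMonoOn _).congr fun x hx => (hright x hx).symm)
  · rw [← Icc_union_Icc_eq_Icc ham hmb, ← Icc_union_Icc_eq_Icc ham' hmb',
      inter_union_distrib_left, inter_union_distrib_left, image_union, ← hf.image_inter_Icc,
      ← hg.image_inter_Icc]
    congr 1
    · exact image_congr fun x hx => if_pos hx.2.2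
    · exact image_congr fun x hx => hright x hx.2.1

lemma IccMatch.trans (hf : IccMatch K a m a' m') (hg : IccMatch K m b m' b')
    (ham : a ≤ m) (hmb : m ≤ b) : IccMatch K a b a' b' :=
  let ⟨_, hf⟩ := hf
  let ⟨_, hg⟩ := hg
  ⟨_, hf.piecewise hg ham hmb⟩

lemma iccMatch_of_inter_Icc_eq_image {S : Set ℝ} (hab : a < b) (hab' : a' < b')
    (h : K ∩ Icc a b = affineIcc a b '' S) (h' : K ∩ Icc a' b' = affineIcc a' b' '' S) :
    IccMatch K a b a' b' := by
  let e := (affineIccIso hab).symm.trans (affineIccIso hab')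
  have he (t : ℝ) : e (affineIcc a b t) = affineIcc a' b' t :=
    congrArg (affineIccIso hab') ((affineIccIso hab).symm_apply_apply t)
  refine ⟨e, e.continuous, e.strictMono, by simpa using he 0, by simpa using he 1, ?_⟩
  rw [h, h', image_image, funext he]

end Matching

section Chains

variable {K : Set ℝ} {a b c d a' b' r r' : ℝ} {m n : ℕ}

def IsPiece (K : Set ℝ) (a b : ℝ) : Prop := a < b ∧ K ∩ Icc a b = affineIcc a b '' K

def IsGap (K : Set ℝ) (a b : ℝ) : Prop := a < b ∧ K ∩ Icc a b = {a, b}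

/-- `Chain K n a b`: `K ∩ [a, b]` consists of `n + 1` pieces separated by `n` gaps. -/
inductive Chain (K : Set ℝ) : ℕ → ℝ → ℝ → Prop
  | piece {a b : ℝ} : IsPiece K a b → Chain K 0 a b
  | cons {n : ℕ} {a b c d : ℝ} :
      IsPiece K a b → IsGap K b c → Chain K n c d → Chain K (n + 1) a d

lemma IsPiece.left_mem (h : IsPiece K a b) (h0 : 0 ∈ K) : a ∈ K :=
  (h.2.symm ▸ ⟨0, h0, affineIcc_zero a b⟩ : a ∈ K ∩ Icc a b).1

lemma IsPiece.right_mem (h : IsPiece K a b) (h1 : 1 ∈ K) : b ∈ K :=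
  (h.2.symm ▸ ⟨1, h1, affineIcc_one a b⟩ : b ∈ K ∩ Icc a b).1

lemma IsGap.left_mem (h : IsGap K a b) : a ∈ K :=
  (h.2.symm ▸ Or.inl rfl : a ∈ K ∩ Icc a b).1

lemma IsGap.right_mem (h : IsGap K a b) : b ∈ K :=
  (h.2.symm ▸ Or.inr rfl : b ∈ K ∩ Icc a b).1

lemma Chain.lt (h : Chain K n a b) : a < b := by
  induction h with
  | piece hp => exact hp.1
  | cons hp hg _ ih => exact hp.1.trans (hg.1.trans ih)

lemma Chain.left_mem (h : Chain K n a b) (h0 : 0 ∈ K) : a ∈ K := by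
  cases h with
  | piece hp => exact hp.left_mem h0
  | cons hp _ _ => exact hp.left_mem h0

lemma Chain.right_mem (h : Chain K n a b) (h1 : 1 ∈ K) : b ∈ K := by
  induction h with
  | piece hp => exact hp.right_mem h1
  | cons _ _ _ ih => exact ih

lemma Chain.append (h : Chain K m a b) (hg : IsGap K b c) (h' : Chain K n c d) :
    Chain K (n + m + 1) a d := by
  induction h with
  | piece hp => exact .cons hp hg h'
  | cons hp hg' _ ih => exact .cons hp hg' (ih hg)

lemma IsPiece.inter_Icc_affineIcc (hcd : IsPiece K c d) (ha : 0 ≤ a) (hb : b ≤ 1) :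
    K ∩ Icc (affineIcc c d a) (affineIcc c d b) = affineIcc c d '' (K ∩ Icc a b) := by
  set e := affineIccIso hcd.1
  have hsub : Icc (affineIcc c d a) (affineIcc c d b) ⊆ Icc c d := by
    refine Icc_subset_Icc ?_ ?_
    · simpa [e, coe_affineIccIso] using e.monotone ha
    · simpa [e, coe_affineIccIso] using e.monotone hb
  rw [← coe_affineIccIso hcd.1, image_inter e.injective, e.image_Icc, coe_affineIccIso, ← hcd.2,
    inter_assoc, inter_eq_right.2 hsub]

lemma IsPiece.rescale (h : IsPiece K a b) (hcd : IsPiece K c d) (ha : 0 ≤ a) (hb : b ≤ 1) :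
    IsPiece K (affineIcc c d a) (affineIcc c d b) := by
  refine ⟨(affineIccIso hcd.1).strictMono h.1, ?_⟩
  rw [hcd.inter_Icc_affineIcc ha hb, h.2, ← image_comp]
  congr 1
  ext t
  simp only [affineIcc, Function.comp_apply]
  ring

lemma IsGap.rescale (h : IsGap K a b) (hcd : IsPiece K c d) (ha : 0 ≤ a) (hb : b ≤ 1) :
    IsGap K (affineIcc c d a) (affineIcc c d b) :=
  ⟨(affineIccIso hcd.1).strictMono h.1, by rw [hcd.inter_Icc_affineIcc ha hb, h.2, image_pair]⟩

lemma Chain.rescale (h : Chain K n a b) (hcd : IsPiece K c d) :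
    0 ≤ a → b ≤ 1 → Chain K n (affineIcc c d a) (affineIcc c d b) := by
  induction h with
  | piece hp => exact fun ha hb => .piece (hp.rescale hcd ha hb)
  | cons hp hg hc ih =>
    intro ha hb
    have hb₀ := ha.trans hp.1.le
    have hc₁ := hc.lt.le.trans hb
    exact .cons (hp.rescale hcd ha (hg.1.le.trans hc₁)) (hg.rescale hcd hb₀ hc₁)
      (ih (hb₀.trans hg.1.le) hb)

lemma IsPiece.iccMatch (h : IsPiece K a b) (h' : IsPiece K a' b') : IccMatch K a b a' b' :=
  iccMatch_of_inter_Icc_eq_image h.1 h'.1 h.2 h'.2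

lemma IsGap.iccMatch (h : IsGap K a b) (h' : IsGap K a' b') : IccMatch K a b a' b' :=
  iccMatch_of_inter_Icc_eq_image (S := {0, 1}) h.1 h'.1 (by simp [h.2, image_pair])
    (by simp [h'.2, image_pair])

lemma Chain.iccMatch (h : Chain K n a b) (h' : Chain K n a' b') : IccMatch K a b a' b' := by
  induction h generalizing a' b' with
  | piece hp =>
    cases h' with
    | piece hp' => exact hp.iccMatch hp'
  | cons hp hg hc ih =>
    cases h' with
    | cons hp' hg' hc' =>
      exact (hp.iccMatch hp').trans ((hg.iccMatch hg').trans (ih hc') hg.1.le hc.lt.le)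
        hp.1.le (hg.1.trans hc.lt).le

lemma IsPiece.chain_one (h : IsPiece K a b) (hK : Chain K 1 0 1) : Chain K 1 a b := by
  simpa using hK.rescale h le_rfl le_rfl

lemma Chain.succ (h : Chain K n a b) (hK : Chain K 1 0 1) : Chain K (n + 1) a b := by
  cases h with
  | piece hp => exact hp.chain_one hK
  | cons hp hg hc => exact (hp.chain_one hK).append hg hc

lemma Chain.mono (h : Chain K m a b) (hK : Chain K 1 0 1) (hmn : m ≤ n) : Chain K n a b := by
  induction n, hmn using Nat.le_induction with
  | base => exact h
  | succ n _ ih => exact ih.succ hK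

lemma iccMatch_of_chain (hK : Chain K 1 0 1) (h : Chain K m a b) (h' : Chain K n a' b') :
    IccMatch K a b a' b' :=
  (h.mono hK (le_max_left m n)).iccMatch (h'.mono hK (le_max_right m n))

lemma iccMatch_of_gap_chain (hK : Chain K 1 0 1) (hg : IsGap K a r) (h : Chain K m r b)
    (hg' : IsGap K a' r') (h' : Chain K n r' b') : IccMatch K a b a' b' :=
  (hg.iccMatch hg').trans (iccMatch_of_chain hK h h') hg.1.le h.lt.le

end Chains

section CantorSet

variable {a b q q₁ q₂ q₁' q₂' : ℝ} {n : ℕ}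

lemma div_three_mem_cantorSet {x : ℝ} (hx : x ∈ cantorSet) : x / 3 ∈ cantorSet :=
  cantorSet_eq_union_halves ▸ Or.inl ⟨x, hx, rfl⟩

lemma two_add_div_three_mem_cantorSet {x : ℝ} (hx : x ∈ cantorSet) :
    (2 + x) / 3 ∈ cantorSet :=
  cantorSet_eq_union_halves ▸ Or.inr ⟨x, hx, rfl⟩

lemma isPiece_cantorSet_left : IsPiece cantorSet 0 (1 / 3) := by
  refine ⟨by norm_num, Set.ext fun x => ⟨?_, ?_⟩⟩
  · rintro ⟨hx, -, hx₁⟩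
    rw [cantorSet_eq_union_halves] at hx
    rcases hx with ⟨y, hy, rfl⟩ | ⟨y, hy, rfl⟩
    · exact ⟨y, hy, by simp only [affineIcc]; ring⟩
    · linarith [(cantorSet_subset_unitInterval hy).1]
  · rintro ⟨y, hy, rfl⟩
    have hy₀₁ := cantorSet_subset_unitInterval hy
    rw [show affineIcc 0 (1 / 3) y = y / 3 by simp only [affineIcc]; ring]
    exact ⟨div_three_mem_cantorSet hy, by linarith [hy₀₁.1], by linarith [hy₀₁.2]⟩

lemma isPiece_cantorSet_right : IsPiece cantorSet (2 / 3) 1 := by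
  refine ⟨by norm_num, Set.ext fun x => ⟨?_, ?_⟩⟩
  · rintro ⟨hx, hx₀, -⟩
    rw [cantorSet_eq_union_halves] at hx
    rcases hx with ⟨y, hy, rfl⟩ | ⟨y, hy, rfl⟩
    · linarith [(cantorSet_subset_unitInterval hy).2]
    · exact ⟨y, hy, by simp only [affineIcc]; ring⟩
  · rintro ⟨y, hy, rfl⟩
    have hy₀₁ := cantorSet_subset_unitInterval hy
    rw [show affineIcc (2 / 3) 1 y = (2 + y) / 3 by simp only [affineIcc]; ring]
    exact ⟨two_add_div_three_mem_cantorSet hy, by linarith [hy₀₁.1],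
      by linarith [hy₀₁.2]⟩

lemma isGap_cantorSet_middle : IsGap cantorSet (1 / 3) (2 / 3) := by
  refine ⟨by norm_num, Set.ext fun x => ⟨?_, ?_⟩⟩
  · rintro ⟨hx, hx₀, hx₁⟩
    rw [mem_insert_iff, mem_singleton_iff]
    rw [cantorSet_eq_union_halves] at hx
    rcases hx with ⟨y, hy, rfl⟩ | ⟨y, hy, rfl⟩ <;> beta_reduce at hx₀ hx₁ ⊢
    · left
      linarith [(cantorSet_subset_unitInterval hy).2]
    · right
      linarith [(cantorSet_subset_unitInterval hy).1]
  · rintro (rfl | rfl)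
    · exact ⟨div_three_mem_cantorSet one_mem_cantorSet, by norm_num, by norm_num⟩
    · refine ⟨?_, by norm_num, by norm_num⟩
      simpa using two_add_div_three_mem_cantorSet zero_mem_cantorSet

lemma chain_cantorSet : Chain cantorSet 1 0 1 :=
  .cons isPiece_cantorSet_left isGap_cantorSet_middle (.piece isPiece_cantorSet_right)

lemma Chain.div_three (h : Chain cantorSet n a b) : Chain cantorSet n (a / 3) (b / 3) := by
  have := h.rescale isPiece_cantorSet_left
    (cantorSet_subset_unitInterval (h.left_mem zero_mem_cantorSet)).1
    (cantorSet_subset_unitInterval (h.right_mem one_mem_cantorSet)).2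
  convert this using 1 <;> simp only [affineIcc] <;> ring

lemma Chain.two_add_div_three (h : Chain cantorSet n a b) :
    Chain cantorSet n ((2 + a) / 3) ((2 + b) / 3) := by
  have := h.rescale isPiece_cantorSet_right
    (cantorSet_subset_unitInterval (h.left_mem zero_mem_cantorSet)).1
    (cantorSet_subset_unitInterval (h.right_mem one_mem_cantorSet)).2
  convert this using 1 <;> simp only [affineIcc] <;> ring

lemma IsGap.div_three (h : IsGap cantorSet a b) : IsGap cantorSet (a / 3) (b / 3) := by
  have := h.rescale isPiece_cantorSet_left (cantorSet_subset_unitInterval h.left_mem).1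
    (cantorSet_subset_unitInterval h.right_mem).2
  convert this using 1 <;> simp only [affineIcc] <;> ring

lemma IsGap.two_add_div_three (h : IsGap cantorSet a b) :
    IsGap cantorSet ((2 + a) / 3) ((2 + b) / 3) := by
  have := h.rescale isPiece_cantorSet_right (cantorSet_subset_unitInterval h.left_mem).1
    (cantorSet_subset_unitInterval h.right_mem).2
  convert this using 1 <;> simp only [affineIcc] <;> ring

/-- The left endpoints of the gaps of the Cantor set. -/
inductive CantorGapLeft : ℝ → Prop
  | middle : CantorGapLeft (1 / 3)
  | left {x : ℝ} : CantorGapLeft x → CantorGapLeft (x / 3)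
  | right {x : ℝ} : CantorGapLeft x → CantorGapLeft ((2 + x) / 3)

lemma CantorGapLeft.mem_Ioo (h : CantorGapLeft q) : q ∈ Ioo 0 1 := by
  induction h with
  | middle => norm_num
  | left _ ih => exact ⟨by linarith [ih.1], by linarith [ih.2]⟩
  | right _ ih => exact ⟨by linarith [ih.1], by linarith [ih.2]⟩

-- A gap of length `2 (1/3)^(n+1)` to the right of `y / 3` or `(2 + y) / 3` gives one of length
-- `2 (1/3)^n` to the right of `y`; a gap of length `2` is impossible since `1 ∈ cantorSet`.
lemma cantorGapLeft_of_gap (n : ℕ) (hq : q ∈ cantorSet) (hq₁ : q < 1)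
    (hgap : Ioo q (q + 2 * (1 / 3) ^ n) ∩ cantorSet = ∅) : CantorGapLeft q := by
  induction n generalizing q with
  | zero =>
    have h1 : (1 : ℝ) ∈ Ioo q (q + 2 * (1 / 3) ^ 0) ∩ cantorSet :=
      ⟨⟨hq₁, by linarith [(cantorSet_subset_unitInterval hq).1]⟩, one_mem_cantorSet⟩
    exact absurd (hgap.subset h1) (notMem_empty 1)
  | succ n ih =>
    rw [cantorSet_eq_union_halves] at hq
    rcases hq with ⟨y, hy, rfl⟩ | ⟨y, hy, rfl⟩ <;> beta_reduce at hq₁ hgap ⊢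
    · rcases (cantorSet_subset_unitInterval hy).2.eq_or_lt with rfl | hy₁
      · exact .middle
      refine .left (ih hy hy₁ (eq_empty_of_forall_notMem fun z hz' => ?_))
      obtain ⟨⟨hz₀, hz₁⟩, hz⟩ := hz'
      have : z / 3 ∈ Ioo (y / 3) (y / 3 + 2 * (1 / 3) ^ (n + 1)) ∩ cantorSet :=
        ⟨⟨by linarith, by rw [pow_succ]; linarith⟩, div_three_mem_cantorSet hz⟩
      exact hgap.subset this
    · refine .right (ih hy (by linarith) (eq_empty_of_forall_notMem fun z hz' => ?_))
      obtain ⟨⟨hz₀, hz₁⟩, hz⟩ := hz'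
      have : (2 + z) / 3 ∈
          Ioo ((2 + y) / 3) ((2 + y) / 3 + 2 * (1 / 3) ^ (n + 1)) ∩ cantorSet :=
        ⟨⟨by linarith, by rw [pow_succ]; linarith⟩, two_add_div_three_mem_cantorSet hz⟩
      exact hgap.subset this

lemma IsLeftEndpoint.cantorGapLeft (h : IsLeftEndpoint cantorSet 1 q) : CantorGapLeft q := by
  obtain ⟨hq, hq₁, ε, hε, hgap⟩ := h
  obtain ⟨n, hn⟩ := exists_pow_lt_of_lt_one (half_pos hε) (by norm_num : (1 / 3 : ℝ) < 1)
  refine cantorGapLeft_of_gap n hq hq₁ (subset_empty_iff.1 ?_)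
  exact hgap ▸ inter_subset_inter_left _ (Ioo_subset_Ioo_right (by linarith))

lemma CantorGapLeft.exists_chain_zero (h : CantorGapLeft q) : ∃ n, Chain cantorSet n 0 q := by
  induction h with
  | middle => exact ⟨0, .piece isPiece_cantorSet_left⟩
  | left _ ih =>
    obtain ⟨n, hc⟩ := ih
    exact ⟨n, by simpa using hc.div_three⟩
  | right _ ih =>
    obtain ⟨n, hc⟩ := ih
    exact ⟨_, (Chain.piece isPiece_cantorSet_left).append isGap_cantorSet_middle
      (by simpa using hc.two_add_div_three)⟩

lemma CantorGapLeft.exists_gap_chain_one (h : CantorGapLeft q) :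
    ∃ r n, IsGap cantorSet q r ∧ Chain cantorSet n r 1 := by
  induction h with
  | middle => exact ⟨2 / 3, 0, isGap_cantorSet_middle, .piece isPiece_cantorSet_right⟩
  | left _ ih =>
    obtain ⟨r, n, hg, hc⟩ := ih
    exact ⟨r / 3, _, hg.div_three,
      hc.div_three.append isGap_cantorSet_middle (.piece isPiece_cantorSet_right)⟩
  | right _ ih =>
    obtain ⟨r, n, hg, hc⟩ := ih
    exact ⟨(2 + r) / 3, n, hg.two_add_div_three, by convert hc.two_add_div_three; norm_num⟩

lemma CantorGapLeft.exists_gap_chain (h₁ : CantorGapLeft q₁) (h₂ : CantorGapLeft q₂)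
    (h : q₁ < q₂) : ∃ r n, IsGap cantorSet q₁ r ∧ Chain cantorSet n r q₂ := by
  induction h₁ generalizing q₂ with
  | middle =>
    cases h₂ with
    | middle => exact absurd h (lt_irrefl _)
    | left hy => linarith [hy.mem_Ioo.2]
    | right hy =>
      obtain ⟨n, hc⟩ := hy.exists_chain_zero
      exact ⟨2 / 3, n, isGap_cantorSet_middle, by simpa using hc.two_add_div_three⟩
  | left hx ih =>
    obtain ⟨r, n, hg, hc⟩ := hx.exists_gap_chain_one
    cases h₂ with
    | middle => exact ⟨r / 3, n, hg.div_three, hc.div_three⟩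
    | left hy =>
      obtain ⟨r, n, hg, hc⟩ := ih hy (by linarith)
      exact ⟨r / 3, n, hg.div_three, hc.div_three⟩
    | right hy =>
      obtain ⟨m, hc'⟩ := hy.exists_chain_zero
      exact ⟨r / 3, _, hg.div_three, hc.div_three.append isGap_cantorSet_middle
        (by simpa using hc'.two_add_div_three)⟩
  | right hx ih =>
    cases h₂ with
    | middle => linarith [hx.mem_Ioo.1]
    | left hy => linarith [hx.mem_Ioo.1, hy.mem_Ioo.2]
    | right hy =>
      obtain ⟨r, n, hg, hc⟩ := ih hy (by linarith)
      exact ⟨(2 + r) / 3, n, hg.two_add_div_three, hc.two_add_div_three⟩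

theorem exists_isIccMatch_cantorSet (h₁ : CantorGapLeft q₁) (h₂ : CantorGapLeft q₂)
    (h₁' : CantorGapLeft q₁') (h₂' : CantorGapLeft q₂') (h : q₁ < q₂)
    (h' : q₁' < q₂') :
    ∃ g, IsIccMatch cantorSet g 0 1 0 1 ∧ g q₁ = q₁' ∧ g q₂ = q₂' := by
  obtain ⟨_, hH⟩ := h₁.exists_chain_zero
  obtain ⟨_, hH'⟩ := h₁'.exists_chain_zero
  obtain ⟨_, _, hgM, hcM⟩ := h₁.exists_gap_chain h₂ h
  obtain ⟨_, _, hgM', hcM'⟩ := h₁'.exists_gap_chain h₂' h'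
  obtain ⟨_, _, hgT, hcT⟩ := h₂.exists_gap_chain_one
  obtain ⟨_, _, hgT', hcT'⟩ := h₂'.exists_gap_chain_one
  obtain ⟨fH, hfH⟩ := iccMatch_of_chain chain_cantorSet hH hH'
  obtain ⟨fM, hfM⟩ := iccMatch_of_gap_chain chain_cantorSet hgM hcM hgM' hcM'
  obtain ⟨fT, hfT⟩ := iccMatch_of_gap_chain chain_cantorSet hgT hcT hgT' hcT'
  have hHM := hfH.piecewise hfM h₁.mem_Ioo.1.le h.le
  refine ⟨_, hHM.piecewise hfT h₂.mem_Ioo.1.le h₂.mem_Ioo.2.le, ?_, ?_⟩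
  · simp [h.le, hfH.map_right]
  · simp only [le_refl, if_true]
    exact hHM.map_right

end CantorSet

lemma IsLeftEndpoint.of_image_orderIso {K : Set ℝ} {v w p : ℝ} {e : ℝ ≃o ℝ}
    (h : IsLeftEndpoint (e '' K) w (e p)) (hv : e v = w) : IsLeftEndpoint K v p := by
  subst hv
  obtain ⟨hp, hpv, ε, hε, hgap⟩ := h
  refine ⟨e.injective.mem_set_image.1 hp, e.lt_iff_lt.1 hpv, e.symm (e p + ε) - p, ?_, ?_⟩
  · simpa [e.lt_symm_apply] using hε
  · refine eq_empty_of_forall_notMem fun x ⟨⟨hpx, hx⟩, hxK⟩ => ?_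
    have hex : e x ∈ Ioo (e p) (e p + ε) ∩ e '' K :=
      ⟨⟨e.lt_iff_lt.2 hpx, (e.lt_symm_apply).1 (by linarith)⟩, mem_image_of_mem e hxK⟩
    exact absurd (hgap.subset hex) (notMem_empty _)

/-- Given affine copies `C ⊆ [u,v]` and `C* ⊆ [u*,v*]` of the middle-thirds
Cantor set and pairs of left endpoints `p₁ < p₂` in `C`, `p₁* < p₂*` in `C*`, there is an
increasing homeomorphism `f : [u,v] → [u*,v*]` with `f(C) = C*`, `f(p₁) = p₁*`,
`f(p₂) = p₂*`. -/
theorem stmt7 (u v u' v' : ℝ) (huv : u < v) (huv' : u' < v')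
    (C C' : Set ℝ) (hC : C = affineIcc u v '' cantorC) (hC' : C' = affineIcc u' v' '' cantorC)
    (p₁ p₂ p₁' p₂' : ℝ) (h12 : p₁ < p₂) (h12' : p₁' < p₂')
    (hp₁ : IsLeftEndpoint C v p₁) (hp₂ : IsLeftEndpoint C v p₂)
    (hp₁' : IsLeftEndpoint C' v' p₁') (hp₂' : IsLeftEndpoint C' v' p₂') :
    ∃ f : ℝ → ℝ, ContinuousOn f (Set.Icc u v) ∧ StrictMonoOn f (Set.Icc u v) ∧
      f '' Set.Icc u v = Set.Icc u' v' ∧ f '' C = C' ∧ f p₁ = p₁' ∧ f p₂ = p₂' := by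
  subst hC hC'
  rw [cantorC_eq_cantorSet, ← coe_affineIccIso huv, ← coe_affineIccIso huv'] at *
  set e := affineIccIso huv
  set e' := affineIccIso huv'
  have he : e 0 = u ∧ e 1 = v := ⟨affineIcc_zero u v, affineIcc_one u v⟩
  have he' : e' 0 = u' ∧ e' 1 = v' := ⟨affineIcc_zero u' v', affineIcc_one u' v'⟩
  obtain ⟨q₁, -, rfl⟩ := hp₁.1
  obtain ⟨q₂, -, rfl⟩ := hp₂.1
  obtain ⟨q₁', -, rfl⟩ := hp₁'.1
  obtain ⟨q₂', -, rfl⟩ := hp₂'.1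
  obtain ⟨g, hg, hg₁, hg₂⟩ := exists_isIccMatch_cantorSet
    (hp₁.of_image_orderIso he.2).cantorGapLeft (hp₂.of_image_orderIso he.2).cantorGapLeft
    (hp₁'.of_image_orderIso he'.2).cantorGapLeft (hp₂'.of_image_orderIso he'.2).cantorGapLeft
    (e.lt_iff_lt.1 h12) (e'.lt_iff_lt.1 h12')
  have hgK : g '' cantorSet = cantorSet := by
    simpa [inter_eq_left.2 cantorSet_subset_unitInterval] using hg.image_inter_Icc
  refine ⟨e' ∘ g ∘ e.symm,
    (e'.continuous.comp (hg.continuous.comp e.symm.continuous)).continuousOn,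
    (e'.strictMono.comp (hg.strictMono.comp e.symm.strictMono)).strictMonoOn _, ?_, ?_,
    by simp [hg₁], by simp [hg₂]⟩
  · rw [← he.1, ← he.2, ← he'.1, ← he'.2, ← e.image_Icc, ← e'.image_Icc, image_comp,
      image_comp, e.symm_image_image, hg.image_Icc zero_le_one]
  · rw [image_comp, image_comp, e.symm_image_image, hgK]
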